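/- Let α ∈ C_Γ(ι) and v ∈ V. If u_1 and u_2 are distinct vertices of Γ such that the exponent sum of u_1 in α(v) is odd and the exponent sum of u_2 in α(v) is odd, then u_1 and u_2 are adjacent in Γ (so u_1 and u_2 commute in A_Γ). -/

import Mathlib

/-!
If `u₁` and `u₂` are not adjacent, sending them to the reflections `sr 0` and `sr 1` of the
dihedral group `D₄` (which do not commute) and every other vertex to `1` defines a homomorphism
`φ : A_Γ → D₄`. All generators go to involutions, so `φ ∘ ι = φ`. As `α` commutes with `ι`,
`w = α(v)` satisfies `ι(w) = w⁻¹`, hence `φ(w)² = 1`. But odd exponent sums of `u₁` and `u₂`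
force `φ(w)` to be a rotation by an odd multiple of `π / 2`, which has order 4.
-/

namespace RaagPal

/-- The commutator relators defining the right-angled Artin group on a graph. -/
def raagRels {V : Type*} (G : SimpleGraph V) : Set (FreeGroup V) :=
  {r | ∃ i j : V, G.Adj i j ∧
    r = FreeGroup.of i * FreeGroup.of j * (FreeGroup.of i)⁻¹ * (FreeGroup.of j)⁻¹}

/-- The right-angled Artin group `A_Γ`. -/
abbrev RAAG {V : Type*} (G : SimpleGraph V) := PresentedGroup (raagRels G)

/-- The generator of `A_Γ` corresponding to a vertex. -/
def gen {V : Type*} (G : SimpleGraph V) (i : V) : RAAG G := PresentedGroup.of i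

/-- The element of `A_Γ` given by a single letter `v^{±1}`. -/
def letter {V : Type*} (G : SimpleGraph V) (p : V × Bool) : RAAG G :=
  if p.2 then gen G p.1 else (gen G p.1)⁻¹

/-- The element of `A_Γ` represented by a word on `V^{±1}`. -/
def wordProd {V : Type*} (G : SimpleGraph V) (L : List (V × Bool)) : RAAG G :=
  (L.map (letter G)).prod

/-- An element of `A_Γ` is a palindrome if it is represented by a word equal to its reverse. -/
def IsPalindrome {V : Type*} (G : SimpleGraph V) (w : RAAG G) : Prop :=
  ∃ L : List (V × Bool), L.reverse = L ∧ wordProd G L = w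

/-- A palindromic automorphism of `A_Γ`. -/
def IsPalAut {V : Type*} (G : SimpleGraph V) (α : MulAut (RAAG G)) : Prop :=
  ∀ i : V, IsPalindrome G (α (gen G i))

/-- A pure palindromic automorphism: each `α(v)` is a palindrome with middle letter `v^{±1}`. -/
def IsPurePalAut {V : Type*} (G : SimpleGraph V) (α : MulAut (RAAG G)) : Prop :=
  ∀ i : V, ∃ (L : List (V × Bool)) (b : Bool),
    α (gen G i) = wordProd G (L ++ (i, b) :: L.reverse)

/-- `Dom G u v` means `u ≤ v`, i.e. `lk(u) ⊆ st(v)` : `v` dominates `u`. -/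
def Dom {V : Type*} (G : SimpleGraph V) (u v : V) : Prop :=
  ∀ k : V, G.Adj k u → k = v ∨ G.Adj k v

/-- A diagram automorphism of `A_Γ`, induced by a graph automorphism of `Γ`. -/
def IsDiagramAut {V : Type*} (G : SimpleGraph V) (α : MulAut (RAAG G)) : Prop :=
  ∃ φ : G ≃g G, ∀ i : V, α (gen G i) = gen G (φ i)

/-- An inversion `ι_j` of `A_Γ`. -/
def IsInversion {V : Type*} (G : SimpleGraph V) (α : MulAut (RAAG G)) : Prop :=
  ∃ j : V, α (gen G j) = (gen G j)⁻¹ ∧ ∀ k ≠ j, α (gen G k) = gen G k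

/-- The dominated elementary palindromic automorphism `P_ij : v_i ↦ v_j v_i v_j`. -/
def IsPij {V : Type*} (G : SimpleGraph V) (i j : V) (α : MulAut (RAAG G)) : Prop :=
  i ≠ j ∧ Dom G i j ∧ α (gen G i) = gen G j * gen G i * gen G j ∧
    ∀ k ≠ i, α (gen G k) = gen G k

/-- A (well-defined) dominated elementary palindromic automorphism. -/
def IsElemPal {V : Type*} (G : SimpleGraph V) (α : MulAut (RAAG G)) : Prop :=
  ∃ i j : V, IsPij G i j α

/-- An adjacent dominated transvection `τ_ij : v_i ↦ v_i v_j` with `v_i, v_j` adjacent. -/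
def IsAdjTransvection {V : Type*} (G : SimpleGraph V) (α : MulAut (RAAG G)) : Prop :=
  ∃ i j : V, i ≠ j ∧ Dom G i j ∧ G.Adj i j ∧ α (gen G i) = gen G i * gen G j ∧
    ∀ k ≠ i, α (gen G k) = gen G k

/-- The exponent-sum homomorphism `A_Γ → ℤ` of the vertex `u`. -/
def expSum {V : Type*} [DecidableEq V] (G : SimpleGraph V) (u : V) :
    RAAG G →* Multiplicative ℤ :=
  PresentedGroup.toGroup
    (f := fun i => Multiplicative.ofAdd (if i = u then (1 : ℤ) else 0))
    (by
      rintro r ⟨i, j, -, rfl⟩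
      simp only [map_mul, map_inv, FreeGroup.lift_apply_of]
      rw [mul_comm (Multiplicative.ofAdd (if i = u then (1:ℤ) else 0))]
      group)

/-- The abelianisation vector of exponent sums of `w ∈ A_Γ`. -/
def abVec {n : ℕ} (G : SimpleGraph (Fin n)) (w : RAAG G) : Fin n → ℤ :=
  fun i => Multiplicative.toAdd (expSum G i w)

/-- The mod 2 abelianisation vector of `w ∈ A_Γ`. -/
def mod2Vec {n : ℕ} (G : SimpleGraph (Fin n)) (w : RAAG G) : Fin n → ZMod 2 :=
  fun i => (abVec G w i : ZMod 2)

end RaagPal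

namespace RaagPal

open DihedralGroup

variable {V : Type*} {G : SimpleGraph V}

def lift {H : Type*} [Group H] (f : V → H) (hf : ∀ i j, G.Adj i j → Commute (f i) (f j)) :
    RAAG G →* H :=
  PresentedGroup.toGroup (f := f) <| by
    rintro r ⟨i, j, hij, rfl⟩
    simp only [map_mul, map_inv, FreeGroup.lift_apply_of, (hf i j hij).eq]
    group

@[simp]
lemma lift_gen {H : Type*} [Group H] (f : V → H) (hf : ∀ i j, G.Adj i j → Commute (f i) (f j))
    (i : V) : lift f hf (gen G i) = f i :=
  PresentedGroup.toGroup.of _ (x := i)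

lemma commute_gen_of_adj {i j : V} (h : G.Adj i j) : Commute (gen G i) (gen G j) := by
  have := PresentedGroup.one_of_mem (rels := raagRels G) ⟨i, j, h, rfl⟩
  simp only [map_mul, map_inv] at this
  exact commutatorElement_eq_one_iff_commute.mp this

lemma map_apply_eq_of_mul_self_gen_eq_one {H : Type*} [Group H] (φ : RAAG G →* H)
    (hφ : ∀ i, φ (gen G i) * φ (gen G i) = 1) (ι : MulAut (RAAG G))
    (hι : ∀ i, ι (gen G i) = (gen G i)⁻¹) (w : RAAG G) : φ (ι w) = φ w := by
  suffices φ.comp ι.toMonoidHom = φ from DFunLike.congr_fun this w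
  refine PresentedGroup.ext fun i => ?_
  change φ (ι (gen G i)) = φ (gen G i)
  rw [hι, map_inv, inv_eq_of_mul_eq_one_right (hφ i)]

lemma mul_self_map_eq_one_of_apply_eq_inv {H : Type*} [Group H] (φ : RAAG G →* H)
    (hφ : ∀ i, φ (gen G i) * φ (gen G i) = 1) (ι : MulAut (RAAG G))
    (hι : ∀ i, ι (gen G i) = (gen G i)⁻¹) {w : RAAG G} (hw : ι w = w⁻¹) : φ w * φ w = 1 := by
  rw [mul_eq_one_iff_eq_inv]
  conv_lhs => rw [← map_apply_eq_of_mul_self_gen_eq_one φ hφ ι hι w, hw, map_inv]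

/-- The abelianisation `D₄ → (ℤ/2)²`, counting the letters `sr 0` and `sr 1` modulo 2. -/
def dihedralParity : DihedralGroup 4 →* Multiplicative (ZMod 2) × Multiplicative (ZMod 2) where
  toFun
    | r i => (.ofAdd (i.val : ZMod 2), .ofAdd (i.val : ZMod 2))
    | sr i => (.ofAdd (1 + (i.val : ZMod 2)), .ofAdd (i.val : ZMod 2))
  map_one' := rfl
  map_mul' := by decide

lemma mul_self_ne_one_of_dihedralParity_eq {x : DihedralGroup 4}
    (hx : dihedralParity x = (.ofAdd 1, .ofAdd 1)) : x * x ≠ 1 := by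
  revert x
  decide

variable [DecidableEq V]

lemma expSum_gen (u i : V) :
    expSum G u (gen G i) = Multiplicative.ofAdd (if i = u then 1 else 0) :=
  PresentedGroup.toGroup.of _

def reflectionPair (u₁ u₂ i : V) : DihedralGroup 4 :=
  if i = u₁ then sr 0 else if i = u₂ then sr 1 else 1

lemma reflectionPair_mul_self (u₁ u₂ i : V) :
    reflectionPair u₁ u₂ i * reflectionPair u₁ u₂ i = 1 := by
  unfold reflectionPair
  split_ifs <;> decide

lemma commute_reflectionPair_of_not_adj {u₁ u₂ : V} (h : ¬G.Adj u₁ u₂) (i j : V)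
    (hij : G.Adj i j) : Commute (reflectionPair u₁ u₂ i) (reflectionPair u₁ u₂ j) := by
  unfold reflectionPair
  split_ifs <;> subst_vars <;>
    first
      | exact Commute.refl _
      | exact Commute.one_left _
      | exact Commute.one_right _
      | exact absurd hij h
      | exact absurd hij.symm h

lemma dihedralParity_reflectionPair {u₁ u₂ : V} (hne : u₁ ≠ u₂) (i : V) :
    dihedralParity (reflectionPair u₁ u₂ i) =
      (.ofAdd (if i = u₁ then 1 else 0), .ofAdd (if i = u₂ then 1 else 0)) := by
  unfold reflectionPair
  split_ifs <;> first | rfl | (subst_vars; contradiction)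

lemma dihedralParity_lift_reflectionPair {u₁ u₂ : V} (hne : u₁ ≠ u₂) (h : ¬G.Adj u₁ u₂)
    (w : RAAG G) :
    dihedralParity (lift (reflectionPair u₁ u₂) (commute_reflectionPair_of_not_adj h) w) =
      (.ofAdd ((expSum G u₁ w).toAdd : ZMod 2), .ofAdd ((expSum G u₂ w).toAdd : ZMod 2)) := by
  let parity (u : V) : RAAG G →* Multiplicative (ZMod 2) :=
    (Int.castAddHom (ZMod 2)).toMultiplicative.comp (expSum G u)
  suffices dihedralParity.comp (lift _ (commute_reflectionPair_of_not_adj h)) =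
      (parity u₁).prod (parity u₂) from DFunLike.congr_fun this w
  refine PresentedGroup.ext fun i => ?_
  change dihedralParity (lift _ _ (gen G i)) = ((parity u₁).prod (parity u₂)) (gen G i)
  simp [dihedralParity_reflectionPair hne, parity, expSum_gen]

end RaagPal

open RaagPal in
/-- if `α ∈ C_Γ(ι)` and `u_1 ≠ u_2` both have odd exponent sum in `α(v)`,
then `u_1` and `u_2` are adjacent in `Γ` (so the generators `u_1, u_2` commute in `A_Γ`). -/
theorem odd_exponent_sums_adjacent (n : ℕ) (G : SimpleGraph (Fin n))
    (ι : MulAut (RAAG G)) (hι : ∀ i, ι (gen G i) = (gen G i)⁻¹)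
    (α : MulAut (RAAG G)) (hα : α ∈ Subgroup.centralizer ({ι} : Set (MulAut (RAAG G))))
    (v u₁ u₂ : Fin n) (hne : u₁ ≠ u₂)
    (h₁ : Odd (abVec G (α (gen G v)) u₁)) (h₂ : Odd (abVec G (α (gen G v)) u₂)) :
    G.Adj u₁ u₂ ∧ Commute (gen G u₁) (gen G u₂) := by
  have hadj : G.Adj u₁ u₂ := by
    by_contra hnadj
    have hw : ι (α (gen G v)) = (α (gen G v))⁻¹ := by
      have := congrArg (· (gen G v)) (Subgroup.mem_centralizer_singleton_iff.mp hα)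
      simpa only [MulAut.mul_apply, hι, map_inv] using this.symm
    have hsq := mul_self_map_eq_one_of_apply_eq_inv
      (lift (reflectionPair u₁ u₂) (commute_reflectionPair_of_not_adj hnadj))
      (by simpa only [lift_gen] using reflectionPair_mul_self u₁ u₂) ι hι hw
    refine mul_self_ne_one_of_dihedralParity_eq ?_ hsq
    rw [dihedralParity_lift_reflectionPair hne hnadj]
    exact congrArg₂ (fun a b : ZMod 2 => (Multiplicative.ofAdd a, Multiplicative.ofAdd b))
      (ZMod.intCast_eq_one_iff_odd.mpr h₁) (ZMod.intCast_eq_one_iff_odd.mpr h₂)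
  exact ⟨hadj, commute_gen_of_adj hadj⟩
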